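/- Let λ > 0, σ > 0, D > 0, d > 0, and N ∈ ℕ with N ≥ 3. Consider a circular array of N antennas q_n = (0, (D/2)·sin(2πn/N), (D/2)·cos(2πn/N)) ∈ ℝ³, n = 0,…,N−1, reference point q₀ = 0, and the source parametrized as p(θ,φ) = d·(cos φ sin θ, sin φ sin θ, cos θ). Define Δd_n(θ,φ) = ‖p(θ,φ) − q_n‖ − d. Then the elevation and azimuth Fisher informations, each evaluated at (θ,φ) = (π/2, 0), coincide and equal (4π²/(λ²σ²))·Σ_{n=0}^{N−1} (∂Δd_n/∂θ)² = (4π²/(λ²σ²))·Σ_{n=0}^{N−1} (∂Δd_n/∂φ)² = (N·π²/(2·λ²·σ²)) · D² / (1 + D²/(4d²)). -/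
import Mathlib

open Real

/-- The unit direction vector in ℝ³ with elevation `θ` and azimuth `φ`. -/
noncomputable def u (θ φ : ℝ) : EuclideanSpace ℝ (Fin 3) :=
  (WithLp.equiv 2 (Fin 3 → ℝ)).symm
    ![Real.cos φ * Real.sin θ, Real.sin φ * Real.sin θ, Real.cos θ]

/-- The point of ℝ³ (with the Euclidean norm) with coordinates `x`, `y`, `z`. -/
noncomputable def vec3 (x y z : ℝ) : EuclideanSpace ℝ (Fin 3) :=
  (WithLp.equiv 2 (Fin 3 → ℝ)).symm ![x, y, z]

lemma sum_exp_zero' (N : ℕ) (hN : 3 ≤ N) :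
    ∑ n ∈ Finset.range N, Complex.exp ((4 * π * n / N) * Complex.I) = 0 := by
  have hN0 : (N:ℂ) ≠ 0 := by exact_mod_cast (by omega : N ≠ 0)
  have hrw : ∀ n ∈ Finset.range N, Complex.exp ((4 * π * n / N) * Complex.I)
      = (Complex.exp ((4 * π / N) * Complex.I)) ^ n := by
    intro n _
    rw [← Complex.exp_nat_mul]
    ring_nf
  rw [Finset.sum_congr rfl hrw]
  have hne : Complex.exp ((4 * π / N) * Complex.I) ≠ 1 := by
    rw [Ne, Complex.exp_eq_one_iff]
    rintro ⟨k, hk⟩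
    have hI : (Complex.I : ℂ) ≠ 0 := Complex.I_ne_zero
    have hπ : (π:ℂ) ≠ 0 := by exact_mod_cast Real.pi_ne_zero
    have hne0 : (2 * (π:ℂ) * Complex.I) ≠ 0 := by
      simp [hπ, Complex.I_ne_zero]
    have h2 : ((N * k : ℤ) : ℂ) = 2 := by
      apply mul_right_cancel₀ hne0
      field_simp at hk
      push_cast
      rw [show (2:ℂ) * (2 * ↑π * Complex.I) = 4 * ↑π * Complex.I by ring, hk]
      ring
    have h2' : (N : ℤ) * k = 2 := by exact_mod_cast h2
    have : (N:ℤ) ∣ 2 := ⟨k, h2'.symm⟩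
    have := Int.le_of_dvd (by norm_num) this
    omega
  rw [geom_sum_eq hne]
  have : Complex.exp ((4 * π / N) * Complex.I) ^ N = 1 := by
    rw [← Complex.exp_nat_mul]
    have : (N:ℂ) * ((4 * π / N) * Complex.I) = 2 * (2 * π * Complex.I) := by
      field_simp; ring
    rw [this, Complex.exp_eq_one_iff]
    exact ⟨2, by push_cast; ring⟩
  rw [this]
  simp

lemma sum_cos4' (N : ℕ) (hN : 3 ≤ N) :
    ∑ n ∈ Finset.range N, Real.cos (4 * π * n / N) = 0 := by
  have h := sum_exp_zero' N hN
  have h2 : (∑ n ∈ Finset.range N, Complex.exp (((4 * π * n / N : ℝ) : ℂ) * Complex.I)) = 0 := by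
    rw [← h]; apply Finset.sum_congr rfl; intro n _; push_cast; ring_nf
  have h3 := congrArg Complex.re h2
  rw [Complex.re_sum] at h3
  calc ∑ n ∈ Finset.range N, Real.cos (4 * π * n / N)
      = ∑ n ∈ Finset.range N, (Complex.exp (((4 * π * n / N : ℝ) : ℂ) * Complex.I)).re :=
        Finset.sum_congr rfl fun n _ => (Complex.exp_ofReal_mul_I_re _).symm
    _ = 0 := h3

lemma sum_cos_sq' (N : ℕ) (hN : 3 ≤ N) :
    ∑ n ∈ Finset.range N, Real.cos (2 * π * n / N) ^ 2 = N / 2 := by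
  have hrw : ∀ n ∈ Finset.range N, Real.cos (2 * π * n / N) ^ 2
      = 1 / 2 + Real.cos (4 * π * n / N) / 2 := by
    intro n _
    rw [Real.cos_sq]
    ring_nf
  rw [Finset.sum_congr rfl hrw, Finset.sum_add_distrib, Finset.sum_const,
    ← Finset.sum_div, sum_cos4' N hN]
  simp
  ring

lemma sum_sin_sq' (N : ℕ) (hN : 3 ≤ N) :
    ∑ n ∈ Finset.range N, Real.sin (2 * π * n / N) ^ 2 = N / 2 := by
  have hrw : ∀ n ∈ Finset.range N, Real.sin (2 * π * n / N) ^ 2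
      = 1 - Real.cos (2 * π * n / N) ^ 2 := by
    intro n _
    nlinarith [Real.sin_sq_add_cos_sq (2 * π * n / N)]
  rw [Finset.sum_congr rfl hrw, Finset.sum_sub_distrib, sum_cos_sq' N hN]
  simp
  ring

lemma norm_elev (d R c s t : ℝ) (h : s^2 + c^2 = 1) :
    ‖d • u t 0 - vec3 0 (R*s) (R*c)‖ = Real.sqrt (d^2 + R^2 - 2*d*R*c*Real.cos t) := by
  rw [EuclideanSpace.norm_eq]
  congr 1
  simp [u, vec3, Fin.sum_univ_three]
  nlinarith [sin_sq_add_cos_sq t]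

lemma norm_azim (d R c s x : ℝ) (h : s^2 + c^2 = 1) :
    ‖d • u (π/2) x - vec3 0 (R*s) (R*c)‖ = Real.sqrt (d^2 + R^2 - 2*d*R*s*Real.sin x) := by
  rw [EuclideanSpace.norm_eq]
  congr 1
  simp [u, vec3, Fin.sum_univ_three]
  nlinarith [sin_sq_add_cos_sq x]

lemma deriv_elev (d R c s : ℝ) (hd : 0 < d) (hR : 0 < R) (h : s^2 + c^2 = 1) :
    deriv (fun t : ℝ => ‖d • u t 0 - vec3 0 (R*s) (R*c)‖ - d) (π/2)
      = d * R * c / Real.sqrt (d^2 + R^2) := by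
  have hfun : (fun t : ℝ => ‖d • u t 0 - vec3 0 (R*s) (R*c)‖ - d)
      = fun t => Real.sqrt (d^2 + R^2 - 2*d*R*c*Real.cos t) - d :=
    funext fun t => by rw [norm_elev d R c s t h]
  rw [hfun]
  have hA : (0:ℝ) < d^2 + R^2 := by positivity
  have hg : HasDerivAt (fun t : ℝ => d^2 + R^2 - 2*d*R*c*Real.cos t)
      (2*d*R*c*Real.sin (π/2)) (π/2) := by
    have := ((Real.hasDerivAt_cos (π/2)).const_mul (2*d*R*c)).const_sub (d^2 + R^2)
    simpa using this
  have hval : d^2 + R^2 - 2*d*R*c*Real.cos (π/2) = d^2 + R^2 := by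
    simp
  have hne : d^2 + R^2 - 2*d*R*c*Real.cos (π/2) ≠ 0 := by rw [hval]; positivity
  have hsqrt := (Real.hasDerivAt_sqrt hne).comp (π/2) hg
  have H := hsqrt.sub_const d
  simp only [Function.comp_def] at H
  rw [H.deriv, hval]
  rw [Real.sin_pi_div_two]
  rw [div_mul_eq_mul_div, one_mul]
  rw [eq_div_iff (by positivity), div_mul_eq_mul_div]
  rw [div_eq_iff (by positivity : (2:ℝ) * Real.sqrt (d^2+R^2) ≠ 0)]
  ring

lemma deriv_azim (d R c s : ℝ) (hd : 0 < d) (hR : 0 < R) (h : s^2 + c^2 = 1) :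
    deriv (fun x : ℝ => ‖d • u (π/2) x - vec3 0 (R*s) (R*c)‖ - d) 0
      = -(d * R * s) / Real.sqrt (d^2 + R^2) := by
  have hfun : (fun x : ℝ => ‖d • u (π/2) x - vec3 0 (R*s) (R*c)‖ - d)
      = fun x => Real.sqrt (d^2 + R^2 - 2*d*R*s*Real.sin x) - d :=
    funext fun x => by rw [norm_azim d R c s x h]
  rw [hfun]
  have hA : (0:ℝ) < d^2 + R^2 := by positivity
  have hg : HasDerivAt (fun x : ℝ => d^2 + R^2 - 2*d*R*s*Real.sin x)
      (-(2*d*R*s*Real.cos 0)) 0 := by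
    have := ((Real.hasDerivAt_sin 0).const_mul (2*d*R*s)).const_sub (d^2 + R^2)
    simpa using this
  have hval : d^2 + R^2 - 2*d*R*s*Real.sin 0 = d^2 + R^2 := by simp
  have hne : d^2 + R^2 - 2*d*R*s*Real.sin 0 ≠ 0 := by rw [hval]; positivity
  have hsqrt := (Real.hasDerivAt_sqrt hne).comp 0 hg
  have H := hsqrt.sub_const d
  simp only [Function.comp_def] at H
  rw [H.deriv, hval, Real.cos_zero]
  rw [div_mul_eq_mul_div, one_mul]
  rw [div_eq_div_iff (by positivity) (by positivity)]
  ring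

theorem stmt_12 (lam sig D d : ℝ) (hlam : 0 < lam) (hsig : 0 < sig)
    (hD : 0 < D) (hd : 0 < d) (N : ℕ) (hN : 3 ≤ N) :
    (4 * π ^ 2 / (lam ^ 2 * sig ^ 2) *
        ∑ n ∈ Finset.range N,
          (deriv (fun t : ℝ =>
            ‖d • u t 0 -
              vec3 0 (D / 2 * Real.sin (2 * π * n / N))
                (D / 2 * Real.cos (2 * π * n / N))‖ - d) (π / 2)) ^ 2 =
      N * π ^ 2 / (2 * lam ^ 2 * sig ^ 2) *
        (D ^ 2 / (1 + D ^ 2 / (4 * d ^ 2)))) ∧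
    (4 * π ^ 2 / (lam ^ 2 * sig ^ 2) *
        ∑ n ∈ Finset.range N,
          (deriv (fun s : ℝ =>
            ‖d • u (π / 2) s -
              vec3 0 (D / 2 * Real.sin (2 * π * n / N))
                (D / 2 * Real.cos (2 * π * n / N))‖ - d) 0) ^ 2 =
      N * π ^ 2 / (2 * lam ^ 2 * sig ^ 2) *
        (D ^ 2 / (1 + D ^ 2 / (4 * d ^ 2)))) := by
  have hR : (0:ℝ) < D / 2 := by positivity
  have hA : (0:ℝ) < d^2 + (D/2)^2 := by positivity
  have hsA : (0:ℝ) < Real.sqrt (d^2 + (D/2)^2) := Real.sqrt_pos.mpr hA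
  have hsq : Real.sqrt (d^2 + (D/2)^2) ^ 2 = d^2 + (D/2)^2 :=
    Real.sq_sqrt hA.le
  have key : ∀ (S : ℝ), S = (N:ℝ)/2 →
      4 * π ^ 2 / (lam ^ 2 * sig ^ 2) * ((d * (D/2))^2 / (d^2 + (D/2)^2) * S) =
      N * π ^ 2 / (2 * lam ^ 2 * sig ^ 2) * (D ^ 2 / (1 + D ^ 2 / (4 * d ^ 2))) := by
    rintro S rfl
    field_simp
    ring
  constructor
  · have hterm : ∀ n ∈ Finset.range N,
        (deriv (fun t : ℝ =>
            ‖d • u t 0 - vec3 0 (D / 2 * Real.sin (2 * π * n / N))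
              (D / 2 * Real.cos (2 * π * n / N))‖ - d) (π / 2)) ^ 2
        = (d * (D/2))^2 / (d^2 + (D/2)^2) * Real.cos (2 * π * n / N) ^ 2 := by
      intro n _
      rw [deriv_elev d (D/2) (Real.cos (2 * π * n / N)) (Real.sin (2 * π * n / N)) hd hR
        (Real.sin_sq_add_cos_sq _)]
      rw [div_pow, hsq]
      ring
    rw [Finset.sum_congr rfl hterm, ← Finset.mul_sum, sum_cos_sq' N hN]
    exact key _ rfl
  · have hterm : ∀ n ∈ Finset.range N,
        (deriv (fun s : ℝ =>
            ‖d • u (π / 2) s - vec3 0 (D / 2 * Real.sin (2 * π * n / N))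
              (D / 2 * Real.cos (2 * π * n / N))‖ - d) 0) ^ 2
        = (d * (D/2))^2 / (d^2 + (D/2)^2) * Real.sin (2 * π * n / N) ^ 2 := by
      intro n _
      rw [deriv_azim d (D/2) (Real.cos (2 * π * n / N)) (Real.sin (2 * π * n / N)) hd hR
        (Real.sin_sq_add_cos_sq _)]
      rw [div_pow, neg_pow, hsq]
      ring
    rw [Finset.sum_congr rfl hterm, ← Finset.mul_sum, sum_sin_sq' N hN]
    exact key _ rfl
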